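/- Almost surely, lim_{N→∞} E_X[ ŝ_r(n_N, (C_0,…,C_{N−1}) ⊙ Y^{(N)}) · ŝ_i(n_N, (C_0,…,C_{N−1}) ⊙ Y^{(N)}) ] = 0, where E_X denotes expectation over the random signs X_{j_N+1},…,X_{N−1} only (i.e., conditional expectation given (C_k)). -/

import Mathlib

open MeasureTheory ProbabilityTheory Filter Finset
open scoped ENNReal NNReal

/-- The oversampled discrete-time OFDM symbol
`s(n, b) = (1/(σb·√N)) Σ_{k=0}^{N−1} b_k exp(2πi k n/(L N))`. -/
noncomputable def ofdm (L : ℕ) (σb : ℝ) {N : ℕ} (b : Fin N → ℂ) (n : ℕ) : ℂ :=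
  ((1 / (σb * Real.sqrt N) : ℝ) : ℂ) *
    ∑ k : Fin N, b k * Complex.exp (2 * Real.pi * Complex.I * (k : ℕ) * n / ((L : ℂ) * (N : ℂ)))

/-- The signal sample `s(n, (C_0,…,C_{N−1}) ⊙ Y^{(N)})` where
`Y^{(N)} = (x_0^{(N)},…,x_{j_N}^{(N)}, X_{j_N+1},…,X_{N−1})`: the fixed signs
`x N` may depend on `C_0,…,C_{j_N}` (encoded by feeding `x` the data sequence truncated
after index `j_N`), the random signs `X` live on a second probability space. -/
noncomputable def ofdmSignedData {Ω₁ Ω₂ : Type*} (L : ℕ) (σb : ℝ) (jN : ℕ → ℕ)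
    (C : ℕ → Ω₁ → ℂ) (x : (N : ℕ) → (ℕ → ℂ) → ℕ → ℝ) (X : ℕ → Ω₂ → ℝ)
    (N n : ℕ) (ω₁ : Ω₁) (ω₂ : Ω₂) : ℂ :=
  ofdm L σb (fun k : Fin N =>
    C k ω₁ * (((if (k : ℕ) ≤ jN N
      then x N (fun i => if i ≤ jN N then C i ω₁ else 0) k
      else X k ω₂) : ℝ) : ℂ)) n

/-!
Conditionally on the data, the centred real and imaginary parts of the sample are
`∑ Re(z_k) X_k` and `∑ Im(z_k) X_k` over the indices carrying random signs, where
`z_k = C_k e^{2πikn/(LN)} / (σ_b √N)`. The signs are independent with unit variance, so the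
covariance is `∑ Re(z_k) Im(z_k) = (2σ_b²N)⁻¹ ∑ Im(C_k² e^{4πikn/(LN)})`, a normalised sum of
independent, bounded summands that are centred because `∑_{y ∈ M'} y² = 0`. The phases depend
on `N`, so this is a triangular array: Hoeffding's inequality bounds the probability that the
average exceeds `ε` by `2 exp(-c ε² N)`, which is summable, and Borel–Cantelli gives almost sure
convergence to `0`.
-/
open scoped ProbabilityTheory Topology

namespace MeasureTheory.Measure

variable {α : Type*} [MeasurableSpace α]

noncomputable def discreteUniform (s : Finset α) : Measure α :=
  ((#s : ℕ) : ℝ≥0∞)⁻¹ • ∑ y ∈ s, dirac y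

noncomputable def rademacher : Measure ℝ := (2 : ℝ≥0∞)⁻¹ • (dirac 1 + dirac (-1))

lemma discreteUniform_pair_one_neg_one : discreteUniform ({1, -1} : Finset ℝ) = rademacher := by
  rw [discreteUniform, rademacher, Finset.sum_pair (by norm_num), Finset.card_pair (by norm_num)]
  norm_num

end MeasureTheory.Measure

open Measure

section UniformLaw

variable {Ω α : Type*} [MeasurableSpace Ω] [MeasurableSpace α] [MeasurableSingletonClass α]
  {μ : Measure Ω} {C : Ω → α} {s : Finset α}

lemma ae_mem_of_map_eq_discreteUniform (hC : AEMeasurable C μ)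
    (hd : μ.map C = discreteUniform s) : ∀ᵐ ω ∂μ, C ω ∈ s := by
  refine ae_of_ae_map hC ?_
  rw [hd, ae_iff, discreteUniform]
  simp

lemma integral_comp_of_map_eq_discreteUniform {E : Type*} [NormedAddCommGroup E]
    [NormedSpace ℝ E] [CompleteSpace E] (hC : AEMeasurable C μ)
    (hd : μ.map C = discreteUniform s) {g : α → E} (hg : StronglyMeasurable g) :
    ∫ ω, g (C ω) ∂μ = ((#s : ℕ) : ℝ)⁻¹ • ∑ y ∈ s, g y := by
  rw [← integral_map hC hg.aestronglyMeasurable, hd, discreteUniform, integral_smul_measure,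
    integral_finsetSum_measure fun y _ => integrable_dirac enorm_lt_top]
  simp

lemma integral_comp_of_map_eq_rademacher {X : Ω → ℝ} (hX : AEMeasurable X μ)
    (hd : μ.map X = rademacher) {g : ℝ → ℝ} (hg : StronglyMeasurable g) :
    ∫ ω, g (X ω) ∂μ = (g 1 + g (-1)) / 2 := by
  rw [← discreteUniform_pair_one_neg_one] at hd
  rw [integral_comp_of_map_eq_discreteUniform hX hd hg, Finset.sum_pair (by norm_num),
    Finset.card_pair (by norm_num)]
  simp [div_eq_inv_mul]

end UniformLaw

section Rademacher

variable {Ω : Type*} [MeasurableSpace Ω] {μ : Measure Ω} {X : Ω → ℝ}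

lemma memLp_of_map_eq_rademacher [IsFiniteMeasure μ] (hX : AEMeasurable X μ)
    (hd : μ.map X = rademacher) (p : ℝ≥0∞) : MemLp X p μ := by
  rw [← discreteUniform_pair_one_neg_one] at hd
  refine MemLp.of_bound hX.aestronglyMeasurable 1 ?_
  filter_upwards [ae_mem_of_map_eq_discreteUniform hX hd] with ω hω
  obtain h | h : X ω = 1 ∨ X ω = -1 := by simpa using hω
  all_goals simp [h]

lemma integral_of_map_eq_rademacher (hX : AEMeasurable X μ) (hd : μ.map X = rademacher) :
    μ[X] = 0 := by
  simpa using integral_comp_of_map_eq_rademacher hX hd stronglyMeasurable_id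

lemma variance_of_map_eq_rademacher (hX : AEMeasurable X μ) (hd : μ.map X = rademacher) :
    Var[X; μ] = 1 := by
  rw [variance_of_integral_eq_zero hX (integral_of_map_eq_rademacher hX hd),
    integral_comp_of_map_eq_rademacher hX hd (continuous_pow 2).stronglyMeasurable]
  norm_num

end Rademacher

section Covariance

variable {Ω ι : Type*} [MeasurableSpace Ω] {μ : Measure Ω} [IsFiniteMeasure μ]
  {Y : ι → Ω → ℝ}

lemma covariance_sum_mul_sum_of_iIndepFun (hY : ∀ k, MemLp (Y k) 2 μ) (hind : iIndepFun Y μ)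
    (s : Finset ι) (a b : ι → ℝ) :
    cov[fun ω => ∑ k ∈ s, a k * Y k ω, fun ω => ∑ k ∈ s, b k * Y k ω; μ]
      = ∑ k ∈ s, a k * b k * Var[Y k; μ] := by
  classical
  rw [covariance_fun_sum_fun_sum' (fun k _ => (hY k).const_mul _) fun k _ => (hY k).const_mul _]
  refine Finset.sum_congr rfl fun k hk => ?_
  rw [Finset.sum_eq_single k]
  · rw [covariance_const_mul_left, covariance_const_mul_right,
      covariance_self (hY k).aestronglyMeasurable.aemeasurable]
    ring
  · intro l _ hlk
    rw [covariance_const_mul_left, covariance_const_mul_right,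
      (hind.indepFun hlk.symm).covariance_eq_zero (hY k) (hY l)]
    ring
  · exact fun h => absurd hk h

lemma covariance_re_im_sum_mul_ofReal (hY : ∀ k, MemLp (Y k) 2 μ) (hind : iIndepFun Y μ)
    (s : Finset ι) (z : ι → ℂ) :
    cov[fun ω => (∑ k ∈ s, z k * Y k ω).re, fun ω => (∑ k ∈ s, z k * Y k ω).im; μ]
      = ∑ k ∈ s, (z k ^ 2).im / 2 * Var[Y k; μ] := by
  simp only [Complex.re_sum, Complex.im_sum, Complex.re_mul_ofReal, Complex.im_mul_ofReal]
  rw [covariance_sum_mul_sum_of_iIndepFun hY hind]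
  refine Finset.sum_congr rfl fun k _ => ?_
  simp only [sq, Complex.mul_im]
  ring

end Covariance

lemma mul_natCast_le_abs_of_le_abs_div {ε S : ℝ} {N : ℕ} (h : ε ≤ |S / N|) : ε * N ≤ |S| := by
  rcases N.eq_zero_or_pos with rfl | hN
  · simp
  · simpa [abs_div, le_div_iff₀ (Nat.cast_pos.2 hN : (0 : ℝ) < N)] using h

section StrongLaw

variable {Ω : Type*} [MeasurableSpace Ω] {μ : Measure Ω}

lemma measureReal_abs_sum_range_ge_le_of_iIndepFun {X : ℕ → Ω → ℝ} {c : ℝ≥0} {n : ℕ}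
    (hind : iIndepFun X μ) (hX : ∀ k < n, HasSubgaussianMGF (X k) c μ) {ε : ℝ} (hε : 0 ≤ ε) :
    μ.real {ω | ε ≤ |∑ k ∈ range n, X k ω|} ≤ 2 * Real.exp (-ε ^ 2 / (2 * n * c)) := by
  have hneg : iIndepFun (fun k => -X k) μ :=
    hind.comp (fun _ => Neg.neg) fun _ => measurable_neg
  have hsplit : {ω | ε ≤ |∑ k ∈ range n, X k ω|}
      = {ω | ε ≤ ∑ k ∈ range n, X k ω} ∪ {ω | ε ≤ ∑ k ∈ range n, (-X k) ω} := by
    ext ω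
    simp [le_abs', le_neg, or_comm]
  rw [hsplit, two_mul]
  exact (measureReal_union_le _ _).trans (add_le_add
    (HasSubgaussianMGF.measure_sum_range_ge_le_of_iIndepFun hind hX hε)
    (HasSubgaussianMGF.measure_sum_range_ge_le_of_iIndepFun hneg (fun k hk => (hX k hk).neg) hε))

lemma ae_tendsto_zero_of_summable_measureReal [IsFiniteMeasure μ] {Y : ℕ → Ω → ℝ}
    (hY : ∀ ε > 0, Summable fun N => μ.real {ω | ε ≤ |Y N ω|}) :
    ∀ᵐ ω ∂μ, Tendsto (fun N => Y N ω) atTop (𝓝 0) := by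
  have hε : ∀ m : ℕ, ∀ᵐ ω ∂μ, ∀ᶠ N in atTop, |Y N ω| < 1 / ((m : ℝ) + 1) := by
    intro m
    have hsum : ∑' N, μ {ω | 1 / ((m : ℝ) + 1) ≤ |Y N ω|} ≠ ∞ := by
      have h := (hY (1 / ((m : ℝ) + 1)) Nat.one_div_pos_of_nat).tsum_ofReal_ne_top
      simpa only [measureReal_def, ENNReal.ofReal_toReal (measure_ne_top μ _)] using h
    filter_upwards [ae_eventually_notMem hsum] with ω hω
    simpa using hω
  filter_upwards [ae_all_iff.2 hε] with ω hω
  refine (NormedAddGroup.tendsto_nhds_zero).2 fun ε hε => ?_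
  obtain ⟨m, hm⟩ := exists_nat_one_div_lt hε
  filter_upwards [hω m] with N hN
  exact hN.trans hm

theorem ae_tendsto_sum_range_div_of_bounded [IsProbabilityMeasure μ] {V : ℕ → ℕ → Ω → ℝ}
    {R : ℝ} (hmeas : ∀ N k, AEMeasurable (V N k) μ) (hind : ∀ N, iIndepFun (V N) μ)
    (hbdd : ∀ N k, ∀ᵐ ω ∂μ, |V N k ω| ≤ R) (hmean : ∀ N k, μ[V N k] = 0) :
    ∀ᵐ ω ∂μ, Tendsto (fun N : ℕ => (∑ k ∈ range N, V N k ω) / N) atTop (𝓝 0) := by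
  -- `|R| + 1` rather than `R`, so that the sub-Gaussian parameter is positive even if `R = 0`
  set r := |R| + 1
  set c : ℝ≥0 := (‖r - -r‖₊ / 2) ^ 2
  have hc : 0 < c :=
    pow_pos (div_pos (nnnorm_pos.2 (by simp only [sub_neg_eq_add]; positivity)) two_pos) 2
  have hsub : ∀ N k, HasSubgaussianMGF (V N k) c μ := fun N k =>
    hasSubgaussianMGF_of_mem_Icc_of_integral_eq_zero (hmeas N k)
      (by
        filter_upwards [hbdd N k] with ω h
        exact abs_le.1 (h.trans ((le_abs_self R).trans (lt_add_one _).le)))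
      (hmean N k)
  refine ae_tendsto_zero_of_summable_measureReal fun ε hε => ?_
  have hgeom : Summable fun N : ℕ => 2 * Real.exp (-(ε ^ 2 / (2 * c)) * N) := by
    simpa using (Real.summable_pow_mul_exp_neg_nat_mul 0 (by positivity)).mul_left 2
  refine Summable.of_nonneg_of_le (fun N => measureReal_nonneg) (fun N => ?_) hgeom
  calc μ.real {ω | ε ≤ |(∑ k ∈ range N, V N k ω) / N|}
      ≤ μ.real {ω | ε * N ≤ |∑ k ∈ range N, V N k ω|} :=
        measureReal_mono fun _ => mul_natCast_le_abs_of_le_abs_div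
    _ ≤ 2 * Real.exp (-(ε * N) ^ 2 / (2 * N * c)) :=
        measureReal_abs_sum_range_ge_le_of_iIndepFun (hind N) (fun k _ => hsub N k) (by positivity)
    _ = 2 * Real.exp (-(ε ^ 2 / (2 * c)) * N) := by
        rcases N.eq_zero_or_pos with rfl | hN
        · simp
        · field_simp

end StrongLaw

section DataSymbols

variable {Ω : Type*} [MeasurableSpace Ω] {μ : Measure Ω} [IsProbabilityMeasure μ]
  {C : ℕ → Ω → ℂ} {M' : Finset ℂ}

theorem ae_tendsto_sum_im_sq_mul_div (hCmeas : ∀ k, Measurable (C k)) (hCindep : iIndepFun C μ)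
    (hCdist : ∀ k, μ.map (C k) = discreteUniform M') (hM'sq : ∑ y ∈ M', y ^ 2 = 0)
    (u : ℕ → ℕ → ℂ) (hu : ∀ N k, ‖u N k‖ ≤ 1) :
    ∀ᵐ ω ∂μ, Tendsto (fun N : ℕ => (∑ k ∈ range N, (C k ω ^ 2 * u N k).im) / N) atTop (𝓝 0) := by
  have hg : ∀ N k, Continuous fun w : ℂ => (w ^ 2 * u N k).im := fun N k => by fun_prop
  refine ae_tendsto_sum_range_div_of_bounded (R := ∑ y ∈ M', ‖y‖ ^ 2)
    (fun N k => ((hg N k).measurable.comp (hCmeas k)).aemeasurable)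
    (fun N => hCindep.comp _ fun k => (hg N k).measurable) (fun N k => ?_) (fun N k => ?_)
  · filter_upwards [ae_mem_of_map_eq_discreteUniform (hCmeas k).aemeasurable (hCdist k)]
      with ω hω
    calc |(C k ω ^ 2 * u N k).im| ≤ ‖C k ω ^ 2 * u N k‖ := Complex.abs_im_le_norm _
      _ ≤ ‖C k ω‖ ^ 2 * 1 := by rw [norm_mul, norm_pow]; gcongr; exact hu N k
      _ ≤ ∑ y ∈ M', ‖y‖ ^ 2 := by
        rw [mul_one]
        exact Finset.single_le_sum (f := fun y : ℂ => ‖y‖ ^ 2) (fun y _ => by positivity) hω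
  · rw [integral_comp_of_map_eq_discreteUniform (hCmeas k).aemeasurable (hCdist k)
      (hg N k).stronglyMeasurable, ← Complex.im_sum, ← Finset.sum_mul, hM'sq]
    simp

end DataSymbols

section Ofdm

noncomputable def subcarrier (L N n k : ℕ) : ℂ :=
  Complex.exp (2 * Real.pi * Complex.I * k * n / ((L : ℂ) * (N : ℂ)))

lemma norm_subcarrier (L N n k : ℕ) : ‖subcarrier L N n k‖ = 1 := by
  rw [subcarrier, Complex.norm_exp]
  simp [Complex.div_re]

variable {Ω : Type*} [MeasurableSpace Ω] {ν : Measure Ω} [IsFiniteMeasure ν]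

lemma covariance_re_im_ofdm (L : ℕ) (σb : ℝ) {N : ℕ} (n : ℕ) (w : Fin N → ℂ)
    {Y : Fin N → Ω → ℝ} (hY : ∀ k, MemLp (Y k) 2 ν) (hind : iIndepFun Y ν) :
    cov[fun ω => (ofdm L σb (fun k => w k * Y k ω) n).re,
        fun ω => (ofdm L σb (fun k => w k * Y k ω) n).im; ν]
      = (σb ^ 2 * N)⁻¹ / 2 * ∑ k, Var[Y k; ν] * (w k ^ 2 * subcarrier L N n k ^ 2).im := by
  set c : ℝ := 1 / (σb * Real.sqrt N)
  have hsum : ∀ ω, ofdm L σb (fun k => w k * Y k ω) n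
      = ∑ k, c * w k * subcarrier L N n k * Y k ω := fun ω => by
    rw [ofdm, Finset.mul_sum]
    exact Finset.sum_congr rfl fun k _ => by rw [subcarrier]; ring
  have hc : c ^ 2 = (σb ^ 2 * N)⁻¹ := by
    rw [div_pow, mul_pow, Real.sq_sqrt (Nat.cast_nonneg N), one_pow, one_div]
  simp_rw [hsum]
  rw [covariance_re_im_sum_mul_ofReal hY hind, Finset.mul_sum]
  refine Finset.sum_congr rfl fun k _ => ?_
  rw [show ((c : ℂ) * w k * subcarrier L N n k) ^ 2
      = ((c ^ 2 : ℝ) : ℂ) * (w k ^ 2 * subcarrier L N n k ^ 2) by push_cast; ring,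
    Complex.im_ofReal_mul, hc]
  ring

end Ofdm

section SignedData

variable {Ω₁ Ω₂ : Type*} [MeasurableSpace Ω₂] {ν : Measure Ω₂} [IsProbabilityMeasure ν]

lemma covariance_ofdmSignedData (L : ℕ) (σb : ℝ) (jN : ℕ → ℕ) (C : ℕ → Ω₁ → ℂ)
    (x : (N : ℕ) → (ℕ → ℂ) → ℕ → ℝ) {X : ℕ → Ω₂ → ℝ} (hXmeas : ∀ k, Measurable (X k))
    (hXindep : iIndepFun X ν) (hXdist : ∀ k, ν.map (X k) = rademacher) (N n : ℕ) (ω₁ : Ω₁) :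
    cov[fun ω₂ => (ofdmSignedData L σb jN C x X N n ω₁ ω₂).re,
        fun ω₂ => (ofdmSignedData L σb jN C x X N n ω₁ ω₂).im; ν]
      = (2 * σb ^ 2)⁻¹ * ((∑ k ∈ range N,
          (C k ω₁ ^ 2 * ((if k ≤ jN N then 0 else 1) * subcarrier L N n k ^ 2)).im) / N) := by
  set g : ℕ → ℝ → ℝ := fun k t =>
    if k ≤ jN N then x N (fun i => if i ≤ jN N then C i ω₁ else 0) k else t
  have hg : ∀ k, Measurable (g k) := fun k => by
    by_cases hk : k ≤ jN N <;> simp only [g, hk, if_true, if_false] <;> fun_prop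
  have hgX : ∀ k, g k ∘ X k = if k ≤ jN N
      then fun _ => x N (fun i => if i ≤ jN N then C i ω₁ else 0) k else X k := fun k => by
    by_cases hk : k ≤ jN N <;> funext ω₂ <;> simp [g, hk]
  have hY : ∀ k, MemLp (g k ∘ X k) 2 ν := fun k => by
    rw [hgX]
    split_ifs
    · exact memLp_const _
    · exact memLp_of_map_eq_rademacher (hXmeas k).aemeasurable (hXdist k) 2
  have hvar : ∀ k, Var[g k ∘ X k; ν] = if k ≤ jN N then 0 else 1 := fun k => by
    rw [hgX]
    split_ifs
    · simp [variance_eq_integral aemeasurable_const]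
    · exact variance_of_map_eq_rademacher (hXmeas k).aemeasurable (hXdist k)
  have hind : iIndepFun (fun k : Fin N => g k ∘ X k) ν :=
    (hXindep.comp g hg).precomp Fin.val_injective
  rw [show ofdmSignedData L σb jN C x X N n ω₁ = fun ω₂ =>
      ofdm L σb (fun k : Fin N => C k ω₁ * (g k ∘ X k) ω₂) n from rfl,
    covariance_re_im_ofdm L σb n _ (fun k => hY k) hind]
  simp_rw [hvar]
  rw [Fin.sum_univ_eq_sum_range (fun k => (if k ≤ jN N then (0 : ℝ) else 1) *
    (C k ω₁ ^ 2 * subcarrier L N n k ^ 2).im) N]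
  have hweight_im : ∀ k, (C k ω₁ ^ 2 * ((if k ≤ jN N then 0 else 1) * subcarrier L N n k ^ 2)).im
      = (if k ≤ jN N then 0 else 1) * (C k ω₁ ^ 2 * subcarrier L N n k ^ 2).im := fun k => by
    split_ifs <;> simp
  simp_rw [hweight_im]
  ring

end SignedData

theorem covariance_re_im_tendsto_general
    {Ω₁ Ω₂ : Type*} [MeasurableSpace Ω₁] [MeasurableSpace Ω₂]
    (μ : Measure Ω₁) [IsProbabilityMeasure μ] (ν : Measure Ω₂) [IsProbabilityMeasure ν]
    (L : ℕ)
    (M' : Finset ℂ)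
    (hM'sq : ∑ y ∈ M', y ^ 2 = 0)
    (σb : ℝ)
    (C : ℕ → Ω₁ → ℂ) (hCmeas : ∀ k, Measurable (C k))
    (hCindep : iIndepFun C μ)
    (hCdist : ∀ k, Measure.map (C k) μ = (M'.card : ℝ≥0∞)⁻¹ • ∑ y ∈ M', Measure.dirac y)
    (jN : ℕ → ℕ)
    (x : (N : ℕ) → (ℕ → ℂ) → ℕ → ℝ)
    (X : ℕ → Ω₂ → ℝ) (hXmeas : ∀ k, Measurable (X k))
    (hXindep : iIndepFun X ν)
    (hXdist : ∀ k, Measure.map (X k) ν =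
      (2 : ℝ≥0∞)⁻¹ • (Measure.dirac (1 : ℝ) + Measure.dirac (-1 : ℝ)))
    (n : ℕ → ℕ) :
    ∀ᵐ ω₁ ∂μ,
      Tendsto (fun N : ℕ =>
          ∫ ω₂, (((ofdmSignedData L σb jN C x X N (n N) ω₁ ω₂).re -
              ∫ ω₂', (ofdmSignedData L σb jN C x X N (n N) ω₁ ω₂').re ∂ν) *
            ((ofdmSignedData L σb jN C x X N (n N) ω₁ ω₂).im -
              ∫ ω₂', (ofdmSignedData L σb jN C x X N (n N) ω₁ ω₂').im ∂ν)) ∂ν)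
        atTop (nhds 0) := by
  have hweight_norm : ∀ N k, ‖(if k ≤ jN N then 0 else 1) * subcarrier L N (n N) k ^ 2‖ ≤ 1 :=
    fun N k => by split_ifs <;> simp [norm_subcarrier]
  filter_upwards [ae_tendsto_sum_im_sq_mul_div hCmeas hCindep hCdist hM'sq _ hweight_norm]
    with ω₁ hω₁
  have hlim := hω₁.const_mul (2 * σb ^ 2)⁻¹
  rw [mul_zero] at hlim
  refine hlim.congr fun N => ?_
  exact (covariance_ofdmSignedData L σb jN C x hXmeas hXindep hXdist N (n N) ω₁).symm

/-- almost surely in the data symbols,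
`lim_{N→∞} E_X[ ŝ_r(n_N, C ⊙ Y^{(N)}) · ŝ_i(n_N, C ⊙ Y^{(N)}) ] = 0`, where `E_X` is the
expectation over the random signs only (here: the integral over the second probability
space `ν`), and `ŝ_r, ŝ_i` are the real and imaginary parts of the signal sample centered
by their `E_X`-expectations. -/
theorem covariance_re_im_tendsto
    {Ω₁ Ω₂ : Type*} [MeasurableSpace Ω₁] [MeasurableSpace Ω₂]
    (μ : Measure Ω₁) [IsProbabilityMeasure μ] (ν : Measure Ω₂) [IsProbabilityMeasure ν]
    (L : ℕ) (hL : 2 ≤ L)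
    (M' : Finset ℂ) (hM'ne : M'.Nonempty)
    (hM'sq : ∑ y ∈ M', y ^ 2 = 0)
    (σb : ℝ) (hσb : 0 < σb)
    (hσb2 : σb ^ 2 = (M'.card : ℝ)⁻¹ * ∑ y ∈ M', ‖y‖ ^ 2)
    (C : ℕ → Ω₁ → ℂ) (hCmeas : ∀ k, Measurable (C k))
    (hCindep : iIndepFun C μ)
    (hCdist : ∀ k, Measure.map (C k) μ = (M'.card : ℝ≥0∞)⁻¹ • ∑ y ∈ M', Measure.dirac y)
    (α : ℝ) (hα0 : 0 ≤ α) (hα1 : α ≤ 1) (hαrat : ∃ q : ℚ, (q : ℝ) = α)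
    (jN : ℕ → ℕ) (hjN : ∀ N, jN N = Nat.floor (α * N))
    (x : (N : ℕ) → (ℕ → ℂ) → ℕ → ℝ) (hx : ∀ N c k, x N c k = 1 ∨ x N c k = -1)
    (X : ℕ → Ω₂ → ℝ) (hXmeas : ∀ k, Measurable (X k))
    (hXindep : iIndepFun X ν)
    (hXdist : ∀ k, Measure.map (X k) ν =
      (2 : ℝ≥0∞)⁻¹ • (Measure.dirac (1 : ℝ) + Measure.dirac (-1 : ℝ)))
    (n : ℕ → ℕ) (hn : ∀ N, n N < L * N) :
    ∀ᵐ ω₁ ∂μ,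
      Tendsto (fun N : ℕ =>
          ∫ ω₂, (((ofdmSignedData L σb jN C x X N (n N) ω₁ ω₂).re -
              ∫ ω₂', (ofdmSignedData L σb jN C x X N (n N) ω₁ ω₂').re ∂ν) *
            ((ofdmSignedData L σb jN C x X N (n N) ω₁ ω₂).im -
              ∫ ω₂', (ofdmSignedData L σb jN C x X N (n N) ω₁ ω₂').im ∂ν)) ∂ν)
        atTop (nhds 0) :=
  covariance_re_im_tendsto_general μ ν L M' hM'sq σb C hCmeas hCindep hCdist jN x X hXmeas hXindep
    hXdist n
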